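/- Let X be a nonempty compact metric space and μ a finite Borel measure on X with full support (μ(U) > 0 for every nonempty open U ⊆ X). Let u, w : X → ℝ be continuous with min u = 0, max u = l > 0 and min w = 0. For t ∈ [0,1] set h_t := min(t·l, u) + w and g(t) := ∫_X normalize(h_t) dμ, and let t₀ ∈ [0,1] be the unique minimizer of g on [0,1]. Then for every t ∈ [0,1], osc(h_{t₀}) ≤ osc(h_t). -/

import Mathlib

open MeasureTheory Set

/-- The (attained) minimum of `f` on a nonempty compact space. -/
noncomputable def minF {X : Type*} (f : X → ℝ) : ℝ := sInf (Set.range f)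

/-- The (attained) maximum of `f` on a nonempty compact space. -/
noncomputable def maxF {X : Type*} (f : X → ℝ) : ℝ := sSup (Set.range f)

/-- The oscillation `max f - min f`. -/
noncomputable def oscF {X : Type*} (f : X → ℝ) : ℝ := maxF f - minF f

/-- `normalize f = f - min f`. -/
noncomputable def normF {X : Type*} (f : X → ℝ) : X → ℝ := fun x => f x - minF f

/-- The minimizer set of `f`. -/
def argminF {X : Type*} (f : X → ℝ) : Set X := {x | f x = minF f}

/-- The maximizer set of `f`. -/
def argmaxF {X : Type*} (f : X → ℝ) : Set X := {x | f x = maxF f}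

/-!
With `b = min (u + w) ∈ [0, l]`, the minimum of `h_t = min (t l, u) + w` is `min (t l, b)`: it is
at most `t l` where `w` vanishes and at most `b` because `h_t ≤ u + w`. So on `[0, b / l]`,
`normalize h_t = h_t - t l = min (0, u - t l) + w` decreases pointwise in `t`, strictly where
`u = 0`, while on `[b / l, 1]`, `normalize h_t = h_t - b` increases, strictly where `u = l`.
Since `μ` charges every nonempty open set, `g` is strictly decreasing and then strictly increasing,
so `t₀ = b / l`. The same two descriptions show that `osc h_t = max h_t - min h_t` decreases on
`[0, b / l]` and increases on `[b / l, 1]`.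
-/

section MinMax

variable {X : Type*} {f : X → ℝ} {c : ℝ}

theorem le_minF [Nonempty X] (h : ∀ x, c ≤ f x) : c ≤ minF f :=
  le_csInf (range_nonempty f) (forall_mem_range.2 h)

theorem maxF_le [Nonempty X] (h : ∀ x, f x ≤ c) : maxF f ≤ c :=
  csSup_le (range_nonempty f) (forall_mem_range.2 h)

variable [TopologicalSpace X] [CompactSpace X]

theorem minF_le (hf : Continuous f) (x : X) : minF f ≤ f x :=
  csInf_le (isCompact_range hf).bddBelow (mem_range_self x)

theorem le_maxF (hf : Continuous f) (x : X) : f x ≤ maxF f :=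
  le_csSup (isCompact_range hf).bddAbove (mem_range_self x)

theorem exists_eq_minF [Nonempty X] (hf : Continuous f) : ∃ x, f x = minF f :=
  (isCompact_range hf).sInf_mem (range_nonempty f)

theorem exists_eq_maxF [Nonempty X] (hf : Continuous f) : ∃ x, f x = maxF f :=
  (isCompact_range hf).sSup_mem (range_nonempty f)

end MinMax

theorem integral_lt_integral_of_continuous {X : Type*} [TopologicalSpace X] [CompactSpace X]
    [MeasurableSpace X] [OpensMeasurableSpace X] (μ : Measure X) [IsFiniteMeasure μ]
    [μ.IsOpenPosMeasure] {f g : X → ℝ} (hf : Continuous f) (hg : Continuous g)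
    (hle : ∀ x, f x ≤ g x) (hlt : ∃ x, f x < g x) :
    ∫ x, f x ∂μ < ∫ x, g x ∂μ := by
  obtain ⟨x₀, hx₀⟩ := hlt
  have hfi := hf.integrable_of_hasCompactSupport (μ := μ) (.of_compactSpace f)
  have hgi := hg.integrable_of_hasCompactSupport (μ := μ) (.of_compactSpace g)
  have hpos : 0 < ∫ x, (g x - f x) ∂μ :=
    integral_pos_of_integrable_nonneg_nonzero (x := x₀) (hg.sub hf) (hgi.sub hfi)
      (fun x => sub_nonneg.2 (hle x)) (sub_pos.2 hx₀).ne'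
  rw [integral_sub hgi hfi] at hpos
  exact sub_pos.1 hpos

section Order

variable {α β : Type*} [LinearOrder α] [Preorder β] {g : α → β} {a b c t₀ : α}

theorem IsMinOn.eq_of_strictAntiOn_of_strictMonoOn (hmin : IsMinOn g (Icc a b) t₀)
    (ht₀ : t₀ ∈ Icc a b) (hc : c ∈ Icc a b) (hanti : StrictAntiOn g (Icc a c))
    (hmono : StrictMonoOn g (Icc c b)) : t₀ = c := by
  rcases lt_trichotomy t₀ c with hlt | heq | hgt
  · exact absurd (hmin hc) (hanti ⟨ht₀.1, hlt.le⟩ ⟨hc.1, le_rfl⟩ hlt).not_ge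
  · exact heq
  · exact absurd (hmin hc) (hmono ⟨le_rfl, hc.2⟩ ⟨hgt.le, ht₀.2⟩ hgt).not_ge

theorem isMinOn_of_antitoneOn_of_monotoneOn (hc : c ∈ Icc a b)
    (hanti : AntitoneOn g (Icc a c)) (hmono : MonotoneOn g (Icc c b)) :
    IsMinOn g (Icc a b) c := by
  intro t ht
  rcases le_total t c with htc | hct
  · exact hanti ⟨ht.1, htc⟩ ⟨hc.1, le_rfl⟩ htc
  · exact hmono ⟨le_rfl, hc.2⟩ ⟨hct, ht.2⟩ hct

end Order

/-- The paper's tropical path `h_t` from `D₁` to `D₂`, seen from `E`. -/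
def tropicalSegment {X : Type*} (u w : X → ℝ) (l t : ℝ) (x : X) : ℝ :=
  min (t * l) (u x) + w x

section TropicalSegment

variable {X : Type*} {u w : X → ℝ} {l t : ℝ}

theorem continuous_tropicalSegment [TopologicalSpace X] (hu : Continuous u) (hw : Continuous w)
    (t : ℝ) : Continuous (tropicalSegment u w l t) :=
  (continuous_const.min hu).add hw

theorem monotone_tropicalSegment (hl : 0 ≤ l) (x : X) : Monotone (tropicalSegment u w l · x) :=
  fun _ _ hst => add_le_add_left (min_le_min_right _ (mul_le_mul_of_nonneg_right hst hl)) _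

theorem antitone_tropicalSegment_sub_mul (hl : 0 ≤ l) (x : X) :
    Antitone (fun t => tropicalSegment u w l t x - t * l) := by
  intro s t hst
  have hsl := mul_le_mul_of_nonneg_right hst hl
  simp only [tropicalSegment]
  rcases min_cases (s * l) (u x) with ⟨hs, _⟩ | ⟨hs, _⟩ <;>
    rcases min_cases (t * l) (u x) with ⟨ht, _⟩ | ⟨ht, _⟩ <;> linarith

variable [TopologicalSpace X] [CompactSpace X] [Nonempty X]

theorem minF_add_mem_Icc (hu : Continuous u) (hw : Continuous w) (humin : minF u = 0)
    (humax : maxF u = l) (hwmin : minF w = 0) : minF (u + w) ∈ Icc 0 l := by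
  obtain ⟨x₀, hx₀⟩ := exists_eq_minF hw
  refine ⟨le_minF fun x => add_nonneg (humin ▸ minF_le hu x) (hwmin ▸ minF_le hw x), ?_⟩
  calc minF (u + w) ≤ u x₀ + w x₀ := minF_le (hu.add hw) x₀
    _ ≤ l := by rw [hx₀, hwmin, add_zero, ← humax]; exact le_maxF hu x₀

theorem minF_tropicalSegment (hu : Continuous u) (hw : Continuous w) (hwmin : minF w = 0)
    (t : ℝ) : minF (tropicalSegment u w l t) = min (t * l) (minF (u + w)) := by
  obtain ⟨x₀, hx₀⟩ := exists_eq_minF hw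
  have hcont := continuous_tropicalSegment (l := l) hu hw t
  apply le_antisymm
  · refine le_min ?_ (le_minF fun x => ?_)
    · calc minF (tropicalSegment u w l t) ≤ tropicalSegment u w l t x₀ := minF_le hcont x₀
        _ ≤ t * l := by simp [tropicalSegment, hx₀, hwmin]
    · exact (minF_le hcont x).trans (add_le_add_left (min_le_right _ _) _)
  · refine le_minF fun x => ?_
    rw [tropicalSegment, ← min_add_add_right]
    exact min_le_min (le_add_of_nonneg_right (hwmin ▸ minF_le hw x)) (minF_le (hu.add hw) x)

theorem minF_tropicalSegment_of_le_div (hu : Continuous u) (hw : Continuous w)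
    (hwmin : minF w = 0) (hl : 0 < l) (ht : t ≤ minF (u + w) / l) :
    minF (tropicalSegment u w l t) = t * l := by
  rw [minF_tropicalSegment hu hw hwmin, min_eq_left ((le_div_iff₀ hl).1 ht)]

theorem minF_tropicalSegment_of_div_le (hu : Continuous u) (hw : Continuous w)
    (hwmin : minF w = 0) (hl : 0 < l) (ht : minF (u + w) / l ≤ t) :
    minF (tropicalSegment u w l t) = minF (u + w) := by
  rw [minF_tropicalSegment hu hw hwmin, min_eq_right ((div_le_iff₀ hl).1 ht)]

theorem antitoneOn_oscF_tropicalSegment (hu : Continuous u) (hw : Continuous w)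
    (hwmin : minF w = 0) (hl : 0 < l) :
    AntitoneOn (fun t => oscF (tropicalSegment u w l t)) (Icc 0 (minF (u + w) / l)) := by
  intro s hs t ht hst
  simp only [oscF, minF_tropicalSegment_of_le_div hu hw hwmin hl hs.2,
    minF_tropicalSegment_of_le_div hu hw hwmin hl ht.2]
  have hmax : maxF (tropicalSegment u w l t) ≤ maxF (tropicalSegment u w l s) - s * l + t * l :=
    maxF_le fun x => by
      have h₁ := antitone_tropicalSegment_sub_mul (u := u) (w := w) hl.le x hst
      have h₂ := le_maxF (continuous_tropicalSegment (l := l) hu hw s) x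
      linarith
  linarith

theorem monotoneOn_oscF_tropicalSegment (hu : Continuous u) (hw : Continuous w)
    (hwmin : minF w = 0) (hl : 0 < l) :
    MonotoneOn (fun t => oscF (tropicalSegment u w l t)) (Icc (minF (u + w) / l) 1) := by
  intro s hs t ht hst
  simp only [oscF, minF_tropicalSegment_of_div_le hu hw hwmin hl hs.1,
    minF_tropicalSegment_of_div_le hu hw hwmin hl ht.1]
  exact sub_le_sub_right (maxF_le fun x => (monotone_tropicalSegment hl.le x hst).trans
    (le_maxF (continuous_tropicalSegment hu hw t) x)) _

variable [MeasurableSpace X] [OpensMeasurableSpace X] (μ : Measure X) [IsFiniteMeasure μ]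
  [μ.IsOpenPosMeasure]

theorem strictAntiOn_integral_normF_tropicalSegment (hu : Continuous u) (hw : Continuous w)
    (hl : 0 < l) (humin : minF u = 0) (hwmin : minF w = 0) :
    StrictAntiOn (fun t => ∫ x, normF (tropicalSegment u w l t) x ∂μ)
      (Icc 0 (minF (u + w) / l)) := by
  obtain ⟨x₀, hx₀⟩ := exists_eq_minF hu
  intro s hs t ht hst
  simp only [normF, minF_tropicalSegment_of_le_div hu hw hwmin hl hs.2,
    minF_tropicalSegment_of_le_div hu hw hwmin hl ht.2]
  refine integral_lt_integral_of_continuous μ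
    ((continuous_tropicalSegment hu hw t).sub continuous_const)
    ((continuous_tropicalSegment hu hw s).sub continuous_const)
    (fun x => antitone_tropicalSegment_sub_mul hl.le x hst.le) ⟨x₀, ?_⟩
  simp only [tropicalSegment, hx₀, humin, min_eq_right (mul_nonneg hs.1 hl.le),
    min_eq_right (mul_nonneg ht.1 hl.le)]
  linarith [mul_lt_mul_of_pos_right hst hl]

theorem strictMonoOn_integral_normF_tropicalSegment (hu : Continuous u) (hw : Continuous w)
    (hl : 0 < l) (humax : maxF u = l) (hwmin : minF w = 0) :
    StrictMonoOn (fun t => ∫ x, normF (tropicalSegment u w l t) x ∂μ)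
      (Icc (minF (u + w) / l) 1) := by
  obtain ⟨x₁, hx₁⟩ := exists_eq_maxF hu
  intro s hs t ht hst
  simp only [normF, minF_tropicalSegment_of_div_le hu hw hwmin hl hs.1,
    minF_tropicalSegment_of_div_le hu hw hwmin hl ht.1]
  refine integral_lt_integral_of_continuous μ
    ((continuous_tropicalSegment hu hw s).sub continuous_const)
    ((continuous_tropicalSegment hu hw t).sub continuous_const)
    (fun x => sub_le_sub_right (monotone_tropicalSegment hl.le x hst.le) _) ⟨x₁, ?_⟩
  simp only [tropicalSegment, hx₁, humax, min_eq_left (mul_le_of_le_one_left hl.le hs.2),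
    min_eq_left (mul_le_of_le_one_left hl.le ht.2)]
  linarith [mul_lt_mul_of_pos_right hst hl]

end TropicalSegment

theorem stmt_16 {X : Type*} [MetricSpace X] [CompactSpace X] [Nonempty X]
    [MeasurableSpace X] [BorelSpace X]
    (μ : Measure X) [IsFiniteMeasure μ]
    (hfull : ∀ U : Set X, IsOpen U → U.Nonempty → 0 < μ U)
    (u w : X → ℝ) (hu : Continuous u) (hw : Continuous w)
    (l : ℝ) (hl : 0 < l) (humin : minF u = 0) (humax : maxF u = l)
    (hwmin : minF w = 0)
    (t₀ : ℝ) (ht₀ : t₀ ∈ Set.Icc (0:ℝ) 1)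
    (ht₀min : ∀ t ∈ Set.Icc (0:ℝ) 1,
      (∫ x, normF (fun x => min (t₀ * l) (u x) + w x) x ∂μ) ≤
        ∫ x, normF (fun x => min (t * l) (u x) + w x) x ∂μ) :
    ∀ t ∈ Set.Icc (0:ℝ) 1,
      oscF (fun x => min (t₀ * l) (u x) + w x) ≤
        oscF (fun x => min (t * l) (u x) + w x) := by
  have : μ.IsOpenPosMeasure := ⟨fun U hU hne => (hfull U hU hne).ne'⟩
  have hb := minF_add_mem_Icc hu hw humin humax hwmin
  have hc : minF (u + w) / l ∈ Icc (0 : ℝ) 1 :=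
    ⟨div_nonneg hb.1 hl.le, div_le_one_of_le₀ hb.2 hl.le⟩
  have ht₀c : t₀ = minF (u + w) / l :=
    IsMinOn.eq_of_strictAntiOn_of_strictMonoOn
      (g := fun t => ∫ x, normF (tropicalSegment u w l t) x ∂μ) ht₀min ht₀ hc
      (strictAntiOn_integral_normF_tropicalSegment μ hu hw hl humin hwmin)
      (strictMonoOn_integral_normF_tropicalSegment μ hu hw hl humax hwmin)
  intro t ht
  rw [ht₀c]
  exact isMinOn_of_antitoneOn_of_monotoneOn (g := fun t => oscF (tropicalSegment u w l t)) hc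
    (antitoneOn_oscF_tropicalSegment hu hw hwmin hl)
    (monotoneOn_oscF_tropicalSegment hu hw hwmin hl) ht
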